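/- For every constant R with 0 < R < 1, the 2-form ω_B on ℝ⁴ is closed and self-dual at every point: for every p ∈ ℝ⁴ and all u,v,w ∈ ℝ⁴ one has (fderiv ω_B p u)(v,w) − (fderiv ω_B p v)(u,w) + (fderiv ω_B p w)(u,v) = 0, and at every point ω_B(e₀,e₁)=ω_B(e₂,e₃), ω_B(e₀,e₂)=ω_B(e₃,e₁), ω_B(e₀,e₃)=ω_B(e₁,e₂). -/

import Mathlib

/-!
In the basis σ₁ = dθ∧dx₁ + dx₂∧dx₃, σ₂ = dθ∧dx₂ + dx₃∧dx₁, σ₃ = dθ∧dx₃ + dx₁∧dx₂ of constant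
self-dual forms, ω_B = f₁σ₁ + f₂σ₂ + f₃σ₃ (`selfDualForm` with coefficients `omegaBᵢ`), so ω_B
is self-dual. Since each σᵢ is constant, dω_B = Σ dfᵢ∧σᵢ, whose four components are div f and
the three components of ∂_θ f − curl f for f = (f₁, f₂, f₃). For the components of ω_B these
vanish by direct differentiation.
-/

noncomputable section

/-- The standard basis vectors of ℝ⁴ (coordinates (θ,x₁,x₂,x₃)). -/
def e (i : Fin 4) : Fin 4 → ℝ := Pi.single i 1

/-- The 2-form ω_B (depending on a constant R), whose self-dual components are
ω_B(e₀,e₁) = (x₁cos θ + x₂sin θ)e^{x₃} − R·x₁, ω_B(e₀,e₂) = (x₁sin θ − x₂cos θ)e^{x₃},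
ω_B(e₀,e₃) = R·x₃, at the point p = (θ,x₁,x₂,x₃). -/
def omegaB (R : ℝ) (p u v : Fin 4 → ℝ) : ℝ :=
  ((p 1 * Real.cos (p 0) + p 2 * Real.sin (p 0)) * Real.exp (p 3) - R * p 1)
    * (u 0 * v 1 - u 1 * v 0 + u 2 * v 3 - u 3 * v 2)
  + ((p 1 * Real.sin (p 0) - p 2 * Real.cos (p 0)) * Real.exp (p 3))
    * (u 0 * v 2 - u 2 * v 0 + u 3 * v 1 - u 1 * v 3)
  + (R * p 3) * (u 0 * v 3 - u 3 * v 0 + u 1 * v 2 - u 2 * v 1)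

def selfDualForm (a b c : ℝ) (u v : Fin 4 → ℝ) : ℝ :=
  a * (u 0 * v 1 - u 1 * v 0 + u 2 * v 3 - u 3 * v 2)
    + b * (u 0 * v 2 - u 2 * v 0 + u 3 * v 1 - u 1 * v 3)
    + c * (u 0 * v 3 - u 3 * v 0 + u 1 * v 2 - u 2 * v 1)

theorem selfDualForm_isSelfDual (a b c : ℝ) :
    selfDualForm a b c (e 0) (e 1) = selfDualForm a b c (e 2) (e 3) ∧
      selfDualForm a b c (e 0) (e 2) = selfDualForm a b c (e 3) (e 1) ∧
      selfDualForm a b c (e 0) (e 3) = selfDualForm a b c (e 1) (e 2) := by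
  simp [selfDualForm, e]

theorem apply_eq_sum_mul_apply_e (D : (Fin 4 → ℝ) →L[ℝ] ℝ) (u : Fin 4 → ℝ) :
    D u = u 0 * D (e 0) + u 1 * D (e 1) + u 2 * D (e 2) + u 3 * D (e 3) := by
  conv_lhs => rw [pi_eq_sum_univ' u]
  simp [Fin.sum_univ_four, e]

theorem selfDualForm_cyclic_sum_eq_zero_of_div_curl (D₁ D₂ D₃ : (Fin 4 → ℝ) →L[ℝ] ℝ)
    (hdiv : D₁ (e 1) + D₂ (e 2) + D₃ (e 3) = 0)
    (h₁ : D₁ (e 0) = D₃ (e 2) - D₂ (e 3))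
    (h₂ : D₂ (e 0) = D₁ (e 3) - D₃ (e 1))
    (h₃ : D₃ (e 0) = D₂ (e 1) - D₁ (e 2)) (u v w : Fin 4 → ℝ) :
    selfDualForm (D₁ u) (D₂ u) (D₃ u) v w - selfDualForm (D₁ v) (D₂ v) (D₃ v) u w
      + selfDualForm (D₁ w) (D₂ w) (D₃ w) u v = 0 := by
  have h₀ : D₃ (e 3) = -D₁ (e 1) - D₂ (e 2) := by linarith
  simp only [selfDualForm, apply_eq_sum_mul_apply_e _ u, apply_eq_sum_mul_apply_e _ v,
    apply_eq_sum_mul_apply_e _ w, h₀, h₁, h₂, h₃]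
  ring

theorem fderiv_selfDualForm_apply {E : Type*} [NormedAddCommGroup E] [NormedSpace ℝ E]
    {f₁ f₂ f₃ : E → ℝ} {p : E} (h₁ : DifferentiableAt ℝ f₁ p)
    (h₂ : DifferentiableAt ℝ f₂ p) (h₃ : DifferentiableAt ℝ f₃ p) (u : E) (v w : Fin 4 → ℝ) :
    fderiv ℝ (fun q => selfDualForm (f₁ q) (f₂ q) (f₃ q) v w) p u =
      selfDualForm (fderiv ℝ f₁ p u) (fderiv ℝ f₂ p u) (fderiv ℝ f₃ p u) v w := by
  have h : HasFDerivAt (fun q => selfDualForm (f₁ q) (f₂ q) (f₃ q) v w) _ p :=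
    ((h₁.hasFDerivAt.mul_const _).add (h₂.hasFDerivAt.mul_const _)).add
      (h₃.hasFDerivAt.mul_const _)
  rw [h.fderiv]
  simp [selfDualForm]
  ring

open Real

def omegaB₁ (R : ℝ) (p : Fin 4 → ℝ) : ℝ :=
  (p 1 * cos (p 0) + p 2 * sin (p 0)) * exp (p 3) - R * p 1

def omegaB₂ (p : Fin 4 → ℝ) : ℝ :=
  (p 1 * sin (p 0) - p 2 * cos (p 0)) * exp (p 3)

def omegaB₃ (R : ℝ) (p : Fin 4 → ℝ) : ℝ := R * p 3

theorem omegaB_eq_selfDualForm (R : ℝ) (p : Fin 4 → ℝ) :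
    omegaB R p = selfDualForm (omegaB₁ R p) (omegaB₂ p) (omegaB₃ R p) := rfl

theorem differentiable_omegaB₁ (R : ℝ) : Differentiable ℝ (omegaB₁ R) := by
  unfold omegaB₁; fun_prop

theorem differentiable_omegaB₂ : Differentiable ℝ omegaB₂ := by
  unfold omegaB₂; fun_prop

theorem differentiable_omegaB₃ (R : ℝ) : Differentiable ℝ (omegaB₃ R) := by
  unfold omegaB₃; fun_prop

theorem fderiv_omegaB₁_apply (R : ℝ) (p u : Fin 4 → ℝ) :
    fderiv ℝ (omegaB₁ R) p u =
      ((u 1 + p 2 * u 0) * cos (p 0) + (u 2 - p 1 * u 0) * sin (p 0)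
        + (p 1 * cos (p 0) + p 2 * sin (p 0)) * u 3) * exp (p 3) - R * u 1 := by
  have hx := fun i => hasFDerivAt_apply (𝕜 := ℝ) i p
  have h : HasFDerivAt (omegaB₁ R) _ p :=
    ((((hx 1).mul (hx 0).cos).add ((hx 2).mul (hx 0).sin)).mul (hx 3).exp).sub
      ((hx 1).const_mul R)
  rw [h.fderiv]
  simp
  ring

theorem fderiv_omegaB₂_apply (p u : Fin 4 → ℝ) :
    fderiv ℝ omegaB₂ p u =
      ((u 1 + p 2 * u 0) * sin (p 0) - (u 2 - p 1 * u 0) * cos (p 0)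
        + (p 1 * sin (p 0) - p 2 * cos (p 0)) * u 3) * exp (p 3) := by
  have hx := fun i => hasFDerivAt_apply (𝕜 := ℝ) i p
  have h : HasFDerivAt omegaB₂ _ p :=
    (((hx 1).mul (hx 0).sin).sub ((hx 2).mul (hx 0).cos)).mul (hx 3).exp
  rw [h.fderiv]
  simp
  ring

theorem fderiv_omegaB₃_apply (R : ℝ) (p u : Fin 4 → ℝ) :
    fderiv ℝ (omegaB₃ R) p u = R * u 3 := by
  have h : HasFDerivAt (omegaB₃ R) _ p := (hasFDerivAt_apply (𝕜 := ℝ) 3 p).const_mul R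
  rw [h.fderiv]
  simp

theorem omegaB_closed_selfDual_general (R : ℝ) :
    (∀ p u v w : Fin 4 → ℝ,
      fderiv ℝ (fun q => omegaB R q v w) p u
      - fderiv ℝ (fun q => omegaB R q u w) p v
      + fderiv ℝ (fun q => omegaB R q u v) p w = 0) ∧
    (∀ p : Fin 4 → ℝ,
      omegaB R p (e 0) (e 1) = omegaB R p (e 2) (e 3) ∧
      omegaB R p (e 0) (e 2) = omegaB R p (e 3) (e 1) ∧
      omegaB R p (e 0) (e 3) = omegaB R p (e 1) (e 2)) := by
  refine ⟨fun p u v w => ?_, fun p => selfDualForm_isSelfDual _ _ _⟩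
  simp only [omegaB_eq_selfDualForm, fderiv_selfDualForm_apply (differentiable_omegaB₁ R p)
    (differentiable_omegaB₂ p) (differentiable_omegaB₃ R p)]
  apply selfDualForm_cyclic_sum_eq_zero_of_div_curl <;>
    simp [fderiv_omegaB₁_apply, fderiv_omegaB₂_apply, fderiv_omegaB₃_apply, e] <;> ring

/-- For every 0 < R < 1, the 2-form ω_B is closed and self-dual at every point. -/
theorem omegaB_closed_selfDual (R : ℝ) (hR0 : 0 < R) (hR1 : R < 1) :
    (∀ p u v w : Fin 4 → ℝ,
      fderiv ℝ (fun q => omegaB R q v w) p u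
      - fderiv ℝ (fun q => omegaB R q u w) p v
      + fderiv ℝ (fun q => omegaB R q u v) p w = 0) ∧
    (∀ p : Fin 4 → ℝ,
      omegaB R p (e 0) (e 1) = omegaB R p (e 2) (e 3) ∧
      omegaB R p (e 0) (e 2) = omegaB R p (e 3) (e 1) ∧
      omegaB R p (e 0) (e 3) = omegaB R p (e 1) (e 2)) :=
  omegaB_closed_selfDual_general R
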